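/- Let ε > 0, y ∈ ℝⁿ, λ ∈ ℝⁿ with λᵢ ≥ 0, let D : ℝⁿ → (ℝ²)ⁿ be a linear map, and set λ_max = maxᵢ λᵢ. Then the gradient of F_ε(x) = ½‖x − y‖₂² + Σᵢ λᵢ h_ε((Dx)ᵢ) is Lipschitz continuous with constant 1 + (3 λ_max/(2ε)) ‖D‖₂², where ‖D‖₂ is the operator norm of D; in particular, if ‖D‖₂² ≤ 8 then ∇F_ε is Lipschitz with constant 1 + 12 λ_max/ε. -/

import Mathlib

/-- The Huber-type smoothing of the Euclidean norm on ℝ². -/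
noncomputable def huber (ε : ℝ) (v : EuclideanSpace ℝ (Fin 2)) : ℝ :=
  if ‖v‖ < ε then 3 / (4 * ε) * ‖v‖ ^ 2 - 1 / (8 * ε ^ 3) * ‖v‖ ^ 4
  else ‖v‖ - 3 * ε / 8


/-- The smoothed weighted-TV denoising functional
`F_ε(x) = ½‖x − y‖² + Σᵢ λᵢ h_ε((Dx)ᵢ)`, with `D : ℝⁿ → (ℝ²)ⁿ` linear. -/
noncomputable def Feps {n : ℕ} (ε : ℝ) (y : EuclideanSpace ℝ (Fin n)) (lam : Fin n → ℝ)
    (D : EuclideanSpace ℝ (Fin n) →L[ℝ] PiLp 2 (fun _ : Fin n => EuclideanSpace ℝ (Fin 2)))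
    (x : EuclideanSpace ℝ (Fin n)) : ℝ :=
  1 / 2 * ‖x - y‖ ^ 2 + ∑ i, lam i * huber ε (D x i)

lemma hasDerivAt_maxcube (x : ℝ) : HasDerivAt (fun t => max t 0 ^ 3) (3 * max x 0 ^ 2) x := by
  rcases lt_trichotomy x 0 with hx | hx | hx
  · have h0 : max x 0 = 0 := max_eq_right hx.le
    have : HasDerivAt (fun _ : ℝ => (0:ℝ)^3) 0 x := hasDerivAt_const x _
    refine (this.congr_of_eventuallyEq ?_).congr_deriv (by rw [h0]; ring)
    filter_upwards [eventually_lt_nhds hx] with t ht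
    rw [max_eq_right ht.le]
  · subst hx
    rw [hasDerivAt_iff_tendsto_slope]
    have h0 : (3 : ℝ) * max 0 0 ^ 2 = 0 := by simp
    rw [h0]
    have hb : ∀ y : ℝ, ‖slope (fun t => max t 0 ^ 3) 0 y‖ ≤ y ^ 2 := by
      intro y
      rw [slope_def_field]
      rcases le_or_gt y 0 with h | h
      · simp [max_eq_right h, max_self, sq_nonneg]
      · rw [max_eq_left h.le, max_self]
        have he : (y ^ 3 - 0 ^ 3) / (y - 0) = y ^ 2 := by
          field_simp; ring
        rw [he, Real.norm_eq_abs, abs_of_nonneg (sq_nonneg y)]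
    refine squeeze_zero_norm hb ?_
    have : Filter.Tendsto (fun y : ℝ => y ^ 2) (nhds 0) (nhds 0) := by
      simpa using (continuous_pow 2).tendsto (0:ℝ)
    exact this.mono_left nhdsWithin_le_nhds
  · have h0 : max x 0 = x := max_eq_left hx.le
    have : HasDerivAt (fun t : ℝ => t^3) (3 * x^2) x := by
      simpa using (hasDerivAt_pow 3 x)
    refine (this.congr_of_eventuallyEq ?_).congr_deriv (by rw [h0])
    filter_upwards [eventually_gt_nhds hx] with t ht
    rw [max_eq_left ht.le]

variable {E : Type*} [NormedAddCommGroup E] [InnerProductSpace ℝ E]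

lemma hasFDerivAt_norm_ne0 {v : E} (hv : v ≠ 0) :
    HasFDerivAt (fun w : E => ‖w‖) (innerSL ℝ (‖v‖⁻¹ • v)) v := by
  have hvn : (0:ℝ) < ‖v‖ := norm_pos_iff.2 hv
  have h1 : HasFDerivAt (fun w : E => ‖w‖ ^ 2) (2 • innerSL ℝ v) v :=
    (hasStrictFDerivAt_norm_sq v).hasFDerivAt
  have h2 : HasDerivAt Real.sqrt (1 / (2 * Real.sqrt (‖v‖ ^ 2))) (‖v‖ ^ 2) :=
    Real.hasDerivAt_sqrt (by positivity)
  have h3 := h2.comp_hasFDerivAt v h1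
  have he : (fun w : E => Real.sqrt (‖w‖ ^ 2)) = fun w : E => ‖w‖ := by
    funext w; exact Real.sqrt_sq (norm_nonneg w)
  rw [Function.comp_def, he] at h3
  refine h3.congr_fderiv ?_
  ext w
  rw [Real.sqrt_sq (norm_nonneg v)]
  simp only [innerSL_apply_apply, ContinuousLinearMap.coe_smul', Pi.smul_apply,
    ContinuousLinearMap.smul_apply, real_inner_smul_left, smul_eq_mul]
  field_simp
  ring


noncomputable def hgrad (ε : ℝ) (v : EuclideanSpace ℝ (Fin 2)) : EuclideanSpace ℝ (Fin 2) :=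
  if ‖v‖ < ε then (3 / (2 * ε) - ‖v‖ ^ 2 / (2 * ε ^ 3)) • v else ‖v‖⁻¹ • v

lemma huber_eq_global {ε : ℝ} (hε : 0 < ε) (v : EuclideanSpace ℝ (Fin 2)) :
    huber ε v = 3 / (4 * ε) * ‖v‖ ^ 2 - 1 / (8 * ε ^ 3) * ‖v‖ ^ 4
      + max (‖v‖ - ε) 0 ^ 3 * (‖v‖ + 3 * ε) / (8 * ε ^ 3) := by
  rw [huber]
  split_ifs with h
  · rw [max_eq_right (by linarith)]
    ring
  · push_neg at h
    rw [max_eq_left (by linarith)]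
    field_simp
    ring

lemma huber_hasFDerivAt {ε : ℝ} (hε : 0 < ε) (v : EuclideanSpace ℝ (Fin 2)) :
    HasFDerivAt (huber ε) (innerSL ℝ (hgrad ε v)) v := by
  have hsq : HasFDerivAt (fun w : EuclideanSpace ℝ (Fin 2) => ‖w‖ ^ 2) (2 • innerSL ℝ v) v :=
    (hasStrictFDerivAt_norm_sq v).hasFDerivAt
  have hA : HasFDerivAt
      (fun w : EuclideanSpace ℝ (Fin 2) => 3 / (4 * ε) * ‖w‖ ^ 2 - 1 / (8 * ε ^ 3) * (‖w‖ ^ 2 * ‖w‖ ^ 2))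
      ((3 / (4 * ε) - 1 / (8 * ε ^ 3) * (2 * ‖v‖ ^ 2)) • (2 • innerSL ℝ v)) v := by
    have h1 := hsq.const_mul (3 / (4 * ε))
    have h2 := (hsq.mul hsq).const_mul (1 / (8 * ε ^ 3))
    have h3 := h1.sub h2
    refine h3.congr_fderiv ?_
    ext w
    simp only [pow_one, Nat.cast_ofNat, ContinuousLinearMap.smul_apply,
      ContinuousLinearMap.coe_sub', Pi.sub_apply, ContinuousLinearMap.add_apply,
      ContinuousLinearMap.coe_smul', Pi.smul_apply, smul_eq_mul]
    ring
  by_cases hv : ‖v‖ < ε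
  · -- inside: huber agrees with the polynomial on a neighborhood
    have heq : huber ε =ᶠ[nhds v]
        fun w => 3 / (4 * ε) * ‖w‖ ^ 2 - 1 / (8 * ε ^ 3) * (‖w‖ ^ 2 * ‖w‖ ^ 2) := by
      have hop : IsOpen {w : EuclideanSpace ℝ (Fin 2) | ‖w‖ < ε} :=
        isOpen_lt continuous_norm continuous_const
      filter_upwards [hop.mem_nhds hv] with w hw
      rw [huber, if_pos hw]; ring
    refine (hA.congr_of_eventuallyEq heq).congr_fderiv ?_
    ext w
    rw [hgrad, if_pos hv]
    simp only [innerSL_apply_apply, real_inner_smul_left, ContinuousLinearMap.smul_apply,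
      smul_eq_mul]
    ring
  · push_neg at hv
    have hv0 : v ≠ 0 := by
      intro h; rw [h, norm_zero] at hv; linarith
    have hvn : (0:ℝ) < ‖v‖ := norm_pos_iff.2 hv0
    have hnrm : HasFDerivAt (fun w : EuclideanSpace ℝ (Fin 2) => ‖w‖)
        (innerSL ℝ (‖v‖⁻¹ • v)) v := hasFDerivAt_norm_ne0 hv0
    -- max cube composed with (‖w‖ - ε)
    have hm : HasDerivAt (fun t : ℝ => max (t - ε) 0 ^ 3) (3 * max (‖v‖ - ε) 0 ^ 2) ‖v‖ := by
      have h1 := hasDerivAt_maxcube (‖v‖ - ε)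
      have h2 : HasDerivAt (fun t : ℝ => t - ε) 1 ‖v‖ := (hasDerivAt_id _).sub_const ε
      have := h1.comp ‖v‖ h2
      simpa [Function.comp_def] using this
    have hB : HasFDerivAt (fun w : EuclideanSpace ℝ (Fin 2) => max (‖w‖ - ε) 0 ^ 3)
        ((3 * max (‖v‖ - ε) 0 ^ 2) • innerSL ℝ (‖v‖⁻¹ • v)) v := hm.comp_hasFDerivAt v hnrm
    have hC : HasFDerivAt (fun w : EuclideanSpace ℝ (Fin 2) => ‖w‖ + 3 * ε)
        (innerSL ℝ (‖v‖⁻¹ • v)) v := hnrm.add_const _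
    have hBC := (hB.mul hC).mul_const (1 / (8 * ε ^ 3))
    have htot := hA.add hBC
    have heq : huber ε = fun w : EuclideanSpace ℝ (Fin 2) =>
        (3 / (4 * ε) * ‖w‖ ^ 2 - 1 / (8 * ε ^ 3) * (‖w‖ ^ 2 * ‖w‖ ^ 2))
        + (max (‖w‖ - ε) 0 ^ 3 * (‖w‖ + 3 * ε)) * (1 / (8 * ε ^ 3)) := by
      funext w
      rw [huber_eq_global hε w]
      ring
    rw [heq]
    refine htot.congr_fderiv ?_
    ext w
    rw [hgrad, if_neg (not_lt.2 hv), max_eq_left (by linarith)]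
    simp only [innerSL_apply_apply, real_inner_smul_left, ContinuousLinearMap.smul_apply,
      ContinuousLinearMap.add_apply, ContinuousLinearMap.coe_smul', Pi.smul_apply,
      smul_eq_mul, ContinuousLinearMap.coe_sub', Pi.sub_apply]
    have hne : ‖v‖ ≠ 0 := ne_of_gt hvn
    field_simp
    ring

lemma hgrad_eq_in {ε : ℝ} (hε : 0 < ε) {w : EuclideanSpace ℝ (Fin 2)} (hw : ‖w‖ ≤ ε) :
    hgrad ε w = (3 / (2 * ε) - ‖w‖ ^ 2 / (2 * ε ^ 3)) • w := by
  rw [hgrad]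
  split_ifs with h
  · rfl
  · have hwe : ‖w‖ = ε := le_antisymm hw (not_lt.1 h)
    rw [hwe]
    congr 1
    field_simp
    ring

lemma hgrad_eq_out {ε : ℝ} {w : EuclideanSpace ℝ (Fin 2)} (hw : ε ≤ ‖w‖) :
    hgrad ε w = ‖w‖⁻¹ • w := by
  rw [hgrad]
  split_ifs with h
  · linarith
  · rfl

lemma smul_sub_smul_normsq (cu cv : ℝ) (u v : EuclideanSpace ℝ (Fin 2)) :
    ‖cu • u - cv • v‖ ^ 2
      = cu ^ 2 * ‖u‖ ^ 2 - 2 * (cu * cv) * (inner ℝ u v : ℝ) + cv ^ 2 * ‖v‖ ^ 2 := by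
  rw [norm_sub_sq_real, norm_smul, norm_smul, real_inner_smul_left, real_inner_smul_right]
  simp only [Real.norm_eq_abs, mul_pow, sq_abs]
  ring

lemma hgrad_lip_in {ε : ℝ} (hε : 0 < ε) {u v : EuclideanSpace ℝ (Fin 2)}
    (hu : ‖u‖ ≤ ε) (hv : ‖v‖ ≤ ε) :
    ‖hgrad ε u - hgrad ε v‖ ≤ 3 / (2 * ε) * ‖u - v‖ := by
  rw [hgrad_eq_in hε hu, hgrad_eq_in hε hv]
  set α := ‖u‖ with hα
  set β := ‖v‖ with hβ
  set p : ℝ := inner ℝ u v with hp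
  have hα0 : 0 ≤ α := norm_nonneg u
  have hβ0 : 0 ≤ β := norm_nonneg v
  have hCS : p ≤ α * β := real_inner_le_norm u v
  refine le_of_pow_le_pow_left₀ two_ne_zero (by positivity) ?_
  rw [mul_pow, smul_sub_smul_normsq, norm_sub_sq_real, ← hα, ← hβ, ← hp]
  have key : 9 * ε ^ 4 * (α ^ 2 - 2 * p + β ^ 2)
      - ((3 * ε ^ 2 - α ^ 2) ^ 2 * α ^ 2
        - 2 * ((3 * ε ^ 2 - α ^ 2) * (3 * ε ^ 2 - β ^ 2)) * p
        + (3 * ε ^ 2 - β ^ 2) ^ 2 * β ^ 2) ≥ 0 := by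
    have h1 : 0 ≤ (α * β - p) * (3 * ε ^ 2 * (α ^ 2 + β ^ 2) - α ^ 2 * β ^ 2) := by
      apply mul_nonneg (by linarith)
      have : α ^ 2 * β ^ 2 ≤ ε ^ 2 * β ^ 2 := by
        apply mul_le_mul_of_nonneg_right _ (sq_nonneg β)
        nlinarith
      nlinarith [sq_nonneg α, sq_nonneg β, sq_nonneg ε]
    have h2 : 0 ≤ (α - β) ^ 2 * ((α ^ 2 + α * β + β ^ 2)
        * (6 * ε ^ 2 - (α ^ 2 + α * β + β ^ 2))) := by
      apply mul_nonneg (sq_nonneg _)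
      apply mul_nonneg
      · nlinarith [mul_nonneg hα0 hβ0]
      · nlinarith [mul_nonneg hα0 hβ0, sq_nonneg (α - β)]
    nlinarith [h1, h2]
  have e1 : (3 / (2 * ε) - α ^ 2 / (2 * ε ^ 3)) ^ 2 * α ^ 2
      - 2 * ((3 / (2 * ε) - α ^ 2 / (2 * ε ^ 3)) * (3 / (2 * ε) - β ^ 2 / (2 * ε ^ 3))) * p
      + (3 / (2 * ε) - β ^ 2 / (2 * ε ^ 3)) ^ 2 * β ^ 2
      = ((3 * ε ^ 2 - α ^ 2) ^ 2 * α ^ 2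
        - 2 * ((3 * ε ^ 2 - α ^ 2) * (3 * ε ^ 2 - β ^ 2)) * p
        + (3 * ε ^ 2 - β ^ 2) ^ 2 * β ^ 2) / (4 * ε ^ 6) := by
    field_simp
    ring
  have e2 : (3 / (2 * ε)) ^ 2 * (α ^ 2 - 2 * p + β ^ 2)
      = 9 * ε ^ 4 * (α ^ 2 - 2 * p + β ^ 2) / (4 * ε ^ 6) := by
    field_simp
    ring
  rw [e1, e2]
  exact (div_le_div_iff_of_pos_right (show (0:ℝ) < 4 * ε ^ 6 by positivity)).mpr (by linarith)

lemma hgrad_lip_out {ε : ℝ} (hε : 0 < ε) {u v : EuclideanSpace ℝ (Fin 2)}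
    (hu : ε ≤ ‖u‖) (hv : ε ≤ ‖v‖) :
    ‖hgrad ε u - hgrad ε v‖ ≤ 3 / (2 * ε) * ‖u - v‖ := by
  rw [hgrad_eq_out hu, hgrad_eq_out hv]
  set α := ‖u‖ with hα
  set β := ‖v‖ with hβ
  set p : ℝ := inner ℝ u v with hp
  have hα0 : 0 < α := lt_of_lt_of_le hε hu
  have hβ0 : 0 < β := lt_of_lt_of_le hε hv
  have hCS : p ≤ α * β := real_inner_le_norm u v
  refine le_of_pow_le_pow_left₀ two_ne_zero (by positivity) ?_
  rw [mul_pow, smul_sub_smul_normsq, norm_sub_sq_real, ← hα, ← hβ, ← hp]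
  have e1 : α⁻¹ ^ 2 * α ^ 2 - 2 * (α⁻¹ * β⁻¹) * p + β⁻¹ ^ 2 * β ^ 2
      = (2 * α * β - 2 * p) / (α * β) := by
    field_simp
    ring
  have e2 : (3 / (2 * ε)) ^ 2 * (α ^ 2 - 2 * p + β ^ 2)
      = 9 * (α ^ 2 - 2 * p + β ^ 2) / (4 * ε ^ 2) := by
    field_simp
    ring
  rw [e1, e2, div_le_div_iff₀ (by positivity) (by positivity)]
  nlinarith [mul_nonneg (sub_nonneg.2 hCS) (show (0:ℝ) ≤ α * β - ε ^ 2 by nlinarith),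
    mul_nonneg (mul_nonneg hα0.le hβ0.le) (sq_nonneg (α - β)), sq_nonneg (α - β),
    mul_pos hα0 hβ0]

lemma hgrad_lip_mixed {ε : ℝ} (hε : 0 < ε) {u v : EuclideanSpace ℝ (Fin 2)}
    (hu : ‖u‖ ≤ ε) (hv : ε ≤ ‖v‖) :
    ‖hgrad ε u - hgrad ε v‖ ≤ 3 / (2 * ε) * ‖u - v‖ := by
  -- find the crossing point on the segment
  have hcont : ContinuousOn (fun t : ℝ => ‖u + t • (v - u)‖) (Set.Icc 0 1) :=
    (continuous_norm.comp (continuous_const.add (continuous_id.smul continuous_const))).continuousOn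
  have h0 : ‖u + (0:ℝ) • (v - u)‖ = ‖u‖ := by simp
  have h1 : ‖u + (1:ℝ) • (v - u)‖ = ‖v‖ := by simp
  have hmem : ε ∈ Set.Icc ‖u + (0:ℝ) • (v - u)‖ ‖u + (1:ℝ) • (v - u)‖ := by
    rw [h0, h1]; exact ⟨hu, hv⟩
  obtain ⟨t, ht, hwt⟩ := intermediate_value_Icc zero_le_one hcont hmem
  set w := u + t • (v - u) with hw
  have hwε : ‖w‖ = ε := hwt
  have huw : ‖u - w‖ = t * ‖u - v‖ := by
    have : u - w = t • (u - v) := by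
      rw [hw]; module
    rw [this, norm_smul, Real.norm_eq_abs, abs_of_nonneg ht.1]
  have hwv : ‖w - v‖ = (1 - t) * ‖u - v‖ := by
    have : w - v = (1 - t) • (u - v) := by
      rw [hw]; module
    rw [this, norm_smul, Real.norm_eq_abs, abs_of_nonneg (by linarith [ht.2])]
  have s1 : ‖hgrad ε u - hgrad ε w‖ ≤ 3 / (2 * ε) * ‖u - w‖ :=
    hgrad_lip_in hε hu (le_of_eq hwε)
  have s2 : ‖hgrad ε w - hgrad ε v‖ ≤ 3 / (2 * ε) * ‖w - v‖ :=
    hgrad_lip_out hε (ge_of_eq hwε) hv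
  have tri : ‖hgrad ε u - hgrad ε v‖ ≤ ‖hgrad ε u - hgrad ε w‖ + ‖hgrad ε w - hgrad ε v‖ :=
    norm_sub_le_norm_sub_add_norm_sub _ _ _
  have hc : (0:ℝ) ≤ 3 / (2 * ε) := by positivity
  calc ‖hgrad ε u - hgrad ε v‖ ≤ 3 / (2 * ε) * ‖u - w‖ + 3 / (2 * ε) * ‖w - v‖ := by linarith
    _ = 3 / (2 * ε) * ‖u - v‖ := by rw [huw, hwv]; ring

lemma hgrad_lip {ε : ℝ} (hε : 0 < ε) (u v : EuclideanSpace ℝ (Fin 2)) :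
    ‖hgrad ε u - hgrad ε v‖ ≤ 3 / (2 * ε) * ‖u - v‖ := by
  rcases le_total ‖u‖ ε with hu | hu <;> rcases le_total ‖v‖ ε with hv | hv
  · exact hgrad_lip_in hε hu hv
  · exact hgrad_lip_mixed hε hu hv
  · rw [norm_sub_rev, norm_sub_rev u v]
    exact hgrad_lip_mixed hε hv hu
  · exact hgrad_lip_out hε hu hv

section Assembly

variable {n : ℕ}

noncomputable def Phi (ε : ℝ) (y : EuclideanSpace ℝ (Fin n)) (lam : Fin n → ℝ)
    (D : EuclideanSpace ℝ (Fin n) →L[ℝ] PiLp 2 (fun _ : Fin n => EuclideanSpace ℝ (Fin 2)))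
    (x : EuclideanSpace ℝ (Fin n)) : EuclideanSpace ℝ (Fin n) →L[ℝ] ℝ :=
  innerSL ℝ (x - y) + ∑ i, lam i •
    ((innerSL ℝ (hgrad ε (D x i))).comp
      ((PiLp.proj 2 (fun _ : Fin n => EuclideanSpace ℝ (Fin 2)) i).comp D))

lemma Feps_hasFDerivAt (ε : ℝ) (hε : 0 < ε) (y : EuclideanSpace ℝ (Fin n)) (lam : Fin n → ℝ)
    (D : EuclideanSpace ℝ (Fin n) →L[ℝ] PiLp 2 (fun _ : Fin n => EuclideanSpace ℝ (Fin 2)))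
    (x : EuclideanSpace ℝ (Fin n)) :
    HasFDerivAt (Feps ε y lam D) (Phi ε y lam D x) x := by
  have hquad : HasFDerivAt (fun x : EuclideanSpace ℝ (Fin n) => 1 / 2 * ‖x - y‖ ^ 2)
      (innerSL ℝ (x - y)) x := by
    have hid : HasFDerivAt (fun x : EuclideanSpace ℝ (Fin n) => x - y)
        (ContinuousLinearMap.id ℝ _) x := (hasFDerivAt_id x).sub_const y
    have h2 := hid.norm_sq.const_mul (1/2 : ℝ)
    refine h2.congr_fderiv ?_
    ext z
    simp [two_smul, real_inner_comm]
    ring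
  have hsum : HasFDerivAt (fun x : EuclideanSpace ℝ (Fin n) => ∑ i, lam i * huber ε (D x i))
      (∑ i, lam i • ((innerSL ℝ (hgrad ε (D x i))).comp
        ((PiLp.proj 2 (fun _ : Fin n => EuclideanSpace ℝ (Fin 2)) i).comp D))) x := by
    apply HasFDerivAt.fun_sum
    intro i _
    have hDi : HasFDerivAt (fun x : EuclideanSpace ℝ (Fin n) => D x i)
        ((PiLp.proj 2 (fun _ : Fin n => EuclideanSpace ℝ (Fin 2)) i).comp D) x :=
      ((PiLp.proj 2 (fun _ : Fin n => EuclideanSpace ℝ (Fin 2)) i).comp D).hasFDerivAt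
    exact ((huber_hasFDerivAt hε (D x i)).comp x hDi).const_mul (lam i)
  exact hquad.add hsum

end Assembly

lemma pi_norm_le_piL2 {ι : Type*} [Fintype ι]
    (w u : PiLp 2 (fun _ : ι => EuclideanSpace ℝ (Fin 2))) (K : ℝ) (hK : 0 ≤ K)
    (h : ∀ i, ‖w i‖ ≤ K * ‖u i‖) : ‖w‖ ≤ K * ‖u‖ := by
  rw [PiLp.norm_eq_of_L2, PiLp.norm_eq_of_L2]
  rw [show K = Real.sqrt (K^2) from (Real.sqrt_sq hK).symm, ← Real.sqrt_mul (sq_nonneg K)]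
  apply Real.sqrt_le_sqrt
  rw [Finset.mul_sum]
  apply Finset.sum_le_sum
  intro i _
  rw [← mul_pow]
  exact pow_le_pow_left₀ (norm_nonneg _) (h i) 2

lemma Phi_lip {n : ℕ} (ε : ℝ) (hε : 0 < ε) (y : EuclideanSpace ℝ (Fin n))
    (lam : Fin n → ℝ) (hlam : ∀ i, 0 ≤ lam i) (lmax : ℝ)
    (hlmax : IsGreatest (Set.range lam) lmax)
    (D : EuclideanSpace ℝ (Fin n) →L[ℝ] PiLp 2 (fun _ : Fin n => EuclideanSpace ℝ (Fin 2)))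
    (x₁ x₂ : EuclideanSpace ℝ (Fin n)) :
    ‖Phi ε y lam D x₁ - Phi ε y lam D x₂‖ ≤ (1 + 3 * lmax / (2 * ε) * ‖D‖ ^ 2) * ‖x₁ - x₂‖ := by
  have hl0 : 0 ≤ lmax := by
    obtain ⟨i, hi⟩ := hlmax.1
    exact hi ▸ hlam i
  set w : PiLp 2 (fun _ : Fin n => EuclideanSpace ℝ (Fin 2)) :=
    WithLp.toLp 2 (fun i => lam i • (hgrad ε (D x₁ i) - hgrad ε (D x₂ i))) with hwdef
  have hw : ‖w‖ ≤ (3 * lmax / (2 * ε)) * ‖D x₁ - D x₂‖ := by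
    apply pi_norm_le_piL2 _ _ _ (by positivity)
    intro i
    have hsub : (D x₁ - D x₂) i = D x₁ i - D x₂ i := rfl
    rw [hwdef, hsub]
    show ‖lam i • (hgrad ε (D x₁ i) - hgrad ε (D x₂ i))‖ ≤ _
    rw [norm_smul, Real.norm_eq_abs, abs_of_nonneg (hlam i)]
    have h1 : ‖hgrad ε (D x₁ i) - hgrad ε (D x₂ i)‖ ≤ 3 / (2 * ε) * ‖D x₁ i - D x₂ i‖ :=
      hgrad_lip hε _ _
    have h2 : lam i ≤ lmax := hlmax.2 ⟨i, rfl⟩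
    calc lam i * ‖hgrad ε (D x₁ i) - hgrad ε (D x₂ i)‖
        ≤ lmax * (3 / (2 * ε) * ‖D x₁ i - D x₂ i‖) :=
          mul_le_mul h2 h1 (norm_nonneg _) hl0
      _ = 3 * lmax / (2 * ε) * ‖D x₁ i - D x₂ i‖ := by ring
  have hDx : ‖D x₁ - D x₂‖ ≤ ‖D‖ * ‖x₁ - x₂‖ := by
    rw [← map_sub]; exact D.le_opNorm _
  apply ContinuousLinearMap.opNorm_le_bound _ (by positivity)
  intro z
  have hval : (Phi ε y lam D x₁ - Phi ε y lam D x₂) z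
      = (inner ℝ (x₁ - x₂) z : ℝ) + ∑ i, (inner ℝ (w i) (D z i) : ℝ) := by
    simp only [Phi, ContinuousLinearMap.sub_apply, ContinuousLinearMap.add_apply,
      ContinuousLinearMap.sum_apply, ContinuousLinearMap.smul_apply,
      ContinuousLinearMap.comp_apply, innerSL_apply_apply, smul_eq_mul, PiLp.proj_apply]
    have hx : (inner ℝ (x₁ - y) z : ℝ) - inner ℝ (x₂ - y) z = inner ℝ (x₁ - x₂) z := by
      rw [← inner_sub_left, sub_sub_sub_cancel_right]
    rw [add_sub_add_comm, hx, ← Finset.sum_sub_distrib]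
    congr 1
    apply Finset.sum_congr rfl
    intro i _
    show _ = (inner ℝ (lam i • (hgrad ε (D x₁ i) - hgrad ε (D x₂ i))) (D z i) : ℝ)
    rw [real_inner_smul_left, inner_sub_left]
    ring
  rw [hval, show (∑ i, (inner ℝ (w i) (D z i) : ℝ)) = (inner ℝ w (D z) : ℝ) from
    (PiLp.inner_apply w (D z)).symm]
  have h1 : |(inner ℝ (x₁ - x₂) z : ℝ)| ≤ ‖x₁ - x₂‖ * ‖z‖ := abs_real_inner_le_norm _ _
  have h2 : |(inner ℝ w (D z) : ℝ)| ≤ ‖w‖ * ‖D z‖ := abs_real_inner_le_norm _ _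
  have h3 : ‖D z‖ ≤ ‖D‖ * ‖z‖ := D.le_opNorm z
  have hw' : ‖w‖ ≤ 3 * lmax / (2 * ε) * (‖D‖ * ‖x₁ - x₂‖) := by
    refine hw.trans ?_
    exact mul_le_mul_of_nonneg_left hDx (by positivity)
  have h4 : ‖w‖ * ‖D z‖ ≤ (3 * lmax / (2 * ε) * (‖D‖ * ‖x₁ - x₂‖)) * (‖D‖ * ‖z‖) :=
    mul_le_mul hw' h3 (norm_nonneg _) (by positivity)
  have h5 : ‖(inner ℝ (x₁ - x₂) z : ℝ) + (inner ℝ w (D z) : ℝ)‖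
      ≤ |(inner ℝ (x₁ - x₂) z : ℝ)| + |(inner ℝ w (D z) : ℝ)| := abs_add_le _ _
  have he : (1 + 3 * lmax / (2 * ε) * ‖D‖ ^ 2) * ‖x₁ - x₂‖ * ‖z‖
      = ‖x₁ - x₂‖ * ‖z‖ + (3 * lmax / (2 * ε) * (‖D‖ * ‖x₁ - x₂‖)) * (‖D‖ * ‖z‖) := by ring
  rw [he]
  linarith

/-- The gradient of `F_ε` is Lipschitz with constant `1 + (3λ_max/(2ε))‖D‖²`;
in particular, if `‖D‖² ≤ 8` it is Lipschitz with constant `1 + 12λ_max/ε`. -/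
theorem stmt_8 {n : ℕ} (ε : ℝ) (hε : 0 < ε) (y : EuclideanSpace ℝ (Fin n))
    (lam : Fin n → ℝ) (hlam : ∀ i, 0 ≤ lam i) (lmax : ℝ)
    (hlmax : IsGreatest (Set.range lam) lmax)
    (D : EuclideanSpace ℝ (Fin n) →L[ℝ] PiLp 2 (fun _ : Fin n => EuclideanSpace ℝ (Fin 2))) :
    (∀ x₁ x₂ : EuclideanSpace ℝ (Fin n),
      ‖gradient (Feps ε y lam D) x₁ - gradient (Feps ε y lam D) x₂‖ ≤
        (1 + 3 * lmax / (2 * ε) * ‖D‖ ^ 2) * ‖x₁ - x₂‖) ∧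
    (‖D‖ ^ 2 ≤ 8 →
      ∀ x₁ x₂ : EuclideanSpace ℝ (Fin n),
        ‖gradient (Feps ε y lam D) x₁ - gradient (Feps ε y lam D) x₂‖ ≤
          (1 + 12 * lmax / ε) * ‖x₁ - x₂‖) := by
  have hg : ∀ x, gradient (Feps ε y lam D) x
      = (InnerProductSpace.toDual ℝ _).symm (Phi ε y lam D x) := by
    intro x
    unfold gradient
    rw [(Feps_hasFDerivAt ε hε y lam D x).fderiv]
  have hlip : ∀ x₁ x₂ : EuclideanSpace ℝ (Fin n),
      ‖gradient (Feps ε y lam D) x₁ - gradient (Feps ε y lam D) x₂‖ ≤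
        (1 + 3 * lmax / (2 * ε) * ‖D‖ ^ 2) * ‖x₁ - x₂‖ := by
    intro x₁ x₂
    rw [hg, hg, ← map_sub, LinearIsometryEquiv.norm_map]
    exact Phi_lip ε hε y lam hlam lmax hlmax D x₁ x₂
  refine ⟨hlip, fun hD8 x₁ x₂ => (hlip x₁ x₂).trans ?_⟩
  have hl0 : 0 ≤ lmax := by
    obtain ⟨i, hi⟩ := hlmax.1
    exact hi ▸ hlam i
  apply mul_le_mul_of_nonneg_right _ (norm_nonneg _)
  have h1 : 3 * lmax / (2 * ε) * ‖D‖ ^ 2 ≤ 3 * lmax / (2 * ε) * 8 :=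
    mul_le_mul_of_nonneg_left hD8 (by positivity)
  have h2 : 3 * lmax / (2 * ε) * 8 = 12 * lmax / ε := by
    field_simp
    ring
  linarith
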